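/- arXiv:2404.02136 — 5 statements merged into one kernel-verified Lean document; each statement's English description precedes it below -/
import Mathlib

section
/- For every integer n ≥ 2, the Ehrhart polynomials of the cross-polytopes satisfy the recursion C_n(x) = (1/n)(2x+1)·C_{n-1}(x) + ((n-1)/n)·C_{n-2}(x), where C_n(x) = Σ_{k=0}^n binom(n,k)·binom(n+x-k, n). -/
open Polynomial

/-- The polynomial `binom(n + x - k, n)` in the variable `x`. -/
noncomputable def binomPoly (n k : ℕ) : Polynomial ℚ :=
  Polynomial.C ((n.factorial : ℚ)⁻¹) *
    ∏ j ∈ Finset.range n, (Polynomial.X + Polynomial.C ((n : ℚ) - k - j))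

/-- The `n`-th cross-polynomial `C_n(x) = ∑_{k=0}^n binom(n,k) binom(n+x-k,n)`. -/
noncomputable def crossPoly (n : ℕ) : Polynomial ℚ :=
  ∑ k ∈ Finset.range (n + 1), Polynomial.C (n.choose k : ℚ) * binomPoly n k



open Finset



-- product formula
lemma prod_sub_cast (N n : ℕ) :
    ∏ j ∈ Finset.range n, ((N : ℚ) - j) = (N.descFactorial n : ℚ) := by
  induction n with
  | zero => simp
  | succ n ih =>
    rw [Finset.prod_range_succ, ih, Nat.descFactorial_succ]
    rcases le_or_gt n N with h | h
    · push_cast [h]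
      ring
    · rw [Nat.descFactorial_eq_zero_iff_lt.2 h]
      simp

-- inner sum (L5)
lemma choose_inner_sum (t j : ℕ) (hj : j ≤ t) :
    ∑ k ∈ Finset.range (t + 1), t.choose k * k.choose j = t.choose j * 2 ^ (t - j) := by
  have h1 : ∑ k ∈ Finset.range (t + 1), t.choose k * k.choose j
      = ∑ k ∈ Finset.Ico j (t + 1), t.choose k * k.choose j := by
    refine (Finset.sum_subset ?_ ?_).symm
    · intro x hx
      simp only [Finset.mem_Ico] at hx
      exact Finset.mem_range.2 hx.2
    · intro x hx hnx
      simp only [Finset.mem_range] at hx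
      simp only [Finset.mem_Ico, not_and, not_lt] at hnx
      have : x < j := by omega
      rw [Nat.choose_eq_zero_of_lt this, Nat.mul_zero]
  rw [h1, Finset.sum_Ico_eq_sum_range]
  have h2 : ∀ i ∈ Finset.range (t + 1 - j), t.choose (j + i) * (j + i).choose j
      = t.choose j * (t - j).choose i := by
    intro i hi
    simp only [Finset.mem_range] at hi
    rw [Nat.choose_mul (Nat.le_add_right _ _), Nat.add_sub_cancel_left]
  rw [Finset.sum_congr rfl h2, ← Finset.mul_sum]
  have : t + 1 - j = (t - j) + 1 := by omega
  rw [this, Nat.sum_range_choose]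


-- key binomial identity
lemma key_choose (N i : ℕ) :
    (i + 1) * (N + 1).choose i + (2 * i + 3) * (N + 1).choose (i + 1)
      + (N + 1) * N.choose (i + 1) = (N + 2) * (N + 2).choose (i + 1) := by
  rcases le_or_gt i (N + 1) with h | h
  · have hP : (N + 2).choose (i + 1) = (N + 1).choose i + (N + 1).choose (i + 1) :=
      Nat.choose_succ_succ _ _
    have h1 : (N + 1).choose (i + 1) = N.choose i + N.choose (i + 1) :=
      Nat.choose_succ_succ _ _
    have h2 : (N + 1).choose (i + 1) * (i + 1) = (N + 1).choose i * (N + 1 - i) :=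
      Nat.choose_succ_right_eq _ _
    have h3 : (N + 1) * N.choose i = (N + 1).choose (i + 1) * (i + 1) :=
      Nat.add_one_mul_choose_eq N i
    have hs : ((N + 1 - i : ℕ) : ℚ) = (N : ℚ) + 1 - i := by
      push_cast [h]; ring
    have goal : ((i : ℚ) + 1) * (N + 1).choose i + (2 * i + 3) * (N + 1).choose (i + 1)
        + (N + 1) * N.choose (i + 1) = (N + 2) * (N + 2).choose (i + 1) := by
      have hP' : ((N + 2).choose (i + 1) : ℚ) = (N + 1).choose i + (N + 1).choose (i + 1) := by
        exact_mod_cast congrArg (Nat.cast : ℕ → ℚ) hP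
      have h1' : ((N + 1).choose (i + 1) : ℚ) = N.choose i + N.choose (i + 1) := by
        exact_mod_cast congrArg (Nat.cast : ℕ → ℚ) h1
      have h2' : ((N + 1).choose (i + 1) : ℚ) * (i + 1)
          = (N + 1).choose i * ((N : ℚ) + 1 - i) := by
        rw [← hs]; exact_mod_cast congrArg (Nat.cast : ℕ → ℚ) h2
      have h3' : ((N : ℚ) + 1) * N.choose i = (N + 1).choose (i + 1) * (i + 1) := by
        exact_mod_cast congrArg (Nat.cast : ℕ → ℚ) h3
      linear_combination (-(N : ℚ) - 2) * hP' + (-(N : ℚ) - 1) * h1' + h2' - h3'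
    exact_mod_cast goal
  · rw [Nat.choose_eq_zero_of_lt h, Nat.choose_eq_zero_of_lt (by omega),
      Nat.choose_eq_zero_of_lt (by omega), Nat.choose_eq_zero_of_lt (by omega)]
    simp




-- Vandermonde step : A = S
lemma A_eq_S (t m : ℕ) :
    ∑ k ∈ Finset.range (t + 1), t.choose k * (m + k).choose t
      = ∑ j ∈ Finset.range (t + 1), 2 ^ j * t.choose j * m.choose j := by
  have hV : ∀ k, (m + k).choose t
      = ∑ i ∈ Finset.range (t + 1), m.choose i * k.choose (t - i) := by
    intro k
    rw [Nat.add_choose_eq]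
    exact Finset.Nat.sum_antidiagonal_eq_sum_range_succ_mk _ t
  calc ∑ k ∈ Finset.range (t + 1), t.choose k * (m + k).choose t
      = ∑ k ∈ Finset.range (t + 1), ∑ i ∈ Finset.range (t + 1),
          m.choose i * (t.choose k * k.choose (t - i)) := by
        refine Finset.sum_congr rfl fun k _ => ?_
        rw [hV k, Finset.mul_sum]
        exact Finset.sum_congr rfl fun i _ => by ring
    _ = ∑ i ∈ Finset.range (t + 1), m.choose i *
          ∑ k ∈ Finset.range (t + 1), t.choose k * k.choose (t - i) := by
        rw [Finset.sum_comm]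
        exact Finset.sum_congr rfl fun i _ => by rw [Finset.mul_sum]
    _ = ∑ i ∈ Finset.range (t + 1), 2 ^ i * t.choose i * m.choose i := by
        refine Finset.sum_congr rfl fun i hi => ?_
        simp only [Finset.mem_range] at hi
        have hi' : i ≤ t := by omega
        rw [choose_inner_sum t (t - i) (by omega), Nat.choose_symm hi',
          Nat.sub_sub_self hi']
        ring

noncomputable def Bq (n m : ℕ) : ℚ :=
  ∑ j ∈ Finset.range (n + 1), 2 ^ j * (n.choose j : ℚ) * (m.choose j : ℚ)

lemma Bq_ext (n m t : ℕ) (h : n ≤ t) :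
    Bq n m = ∑ j ∈ Finset.range (t + 1), 2 ^ j * (n.choose j : ℚ) * (m.choose j : ℚ) := by
  unfold Bq
  refine Finset.sum_subset ?_ ?_
  · exact Finset.range_subset_range.2 (by omega)
  · intro x hx hnx
    simp only [Finset.mem_range, not_lt] at hnx
    rw [Nat.choose_eq_zero_of_lt (by omega)]
    simp

lemma mul_m_choose (m j : ℕ) :
    (m : ℚ) * (m.choose j : ℚ) = (j + 1) * m.choose (j + 1) + j * m.choose j := by
  rcases le_or_gt j m with h | h
  · have h2 : m.choose (j + 1) * (j + 1) = m.choose j * (m - j) := Nat.choose_succ_right_eq m j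
    have hs : ((m - j : ℕ) : ℚ) = (m : ℚ) - j := by push_cast [h]; ring
    have h2' : (m.choose (j + 1) : ℚ) * (j + 1) = m.choose j * ((m : ℚ) - j) := by
      rw [← hs]; exact_mod_cast congrArg (Nat.cast : ℕ → ℚ) h2
    linear_combination -h2'
  · rw [Nat.choose_eq_zero_of_lt h, Nat.choose_eq_zero_of_lt (by omega)]
    simp

lemma S_rec (N m : ℕ) :
    ((N : ℚ) + 2) * Bq (N + 2) m
      = (2 * m + 1) * Bq (N + 1) m + ((N : ℚ) + 1) * Bq N m := by
  rw [Bq_ext (N + 1) m (N + 2) (by omega), Bq_ext N m (N + 2) (by omega)]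
  unfold Bq
  rw [Finset.mul_sum, Finset.mul_sum, Finset.mul_sum, ← Finset.sum_add_distrib]
  -- split the middle term
  have hsplit : ∀ j : ℕ,
      (2 * (m : ℚ) + 1) * (2 ^ j * ((N + 1).choose j : ℚ) * (m.choose j : ℚ))
        + ((N : ℚ) + 1) * (2 ^ j * (N.choose j : ℚ) * (m.choose j : ℚ))
      = (2 * (j : ℚ) + 1) * (2 ^ j * ((N + 1).choose j : ℚ) * (m.choose j : ℚ))
        + 2 ^ (j + 1) * ((j : ℚ) + 1) * ((N + 1).choose j : ℚ) * (m.choose (j + 1) : ℚ)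
        + ((N : ℚ) + 1) * (2 ^ j * (N.choose j : ℚ) * (m.choose j : ℚ)) := by
    intro j
    linear_combination (2 * (2 : ℚ) ^ j * ((N + 1).choose j : ℚ)) * mul_m_choose m j
  rw [Finset.sum_congr rfl fun j _ => hsplit j]
  -- shift sum : define g
  set g : ℕ → ℚ := fun j => 2 ^ j * (j : ℚ) * ((N + 1).choose (j - 1) : ℚ) * (m.choose j : ℚ)
    with hg
  have hshift : ∑ j ∈ Finset.range (N + 3),
      2 ^ (j + 1) * ((j : ℚ) + 1) * ((N + 1).choose j : ℚ) * (m.choose (j + 1) : ℚ)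
      = ∑ j ∈ Finset.range (N + 3), g j := by
    rw [Finset.sum_range_succ' g (N + 2), Finset.sum_range_succ]
    have h0 : g 0 = 0 := by simp [hg]
    have htop : 2 ^ (N + 2 + 1) * ((N + 2 : ℕ) : ℚ) * ((N + 1).choose (N + 2) : ℚ)
        * (m.choose (N + 2 + 1) : ℚ) = 0 := by
      rw [Nat.choose_eq_zero_of_lt (by omega)]; simp
    rw [h0, add_zero]
    clear htop
    have : ∀ i ∈ Finset.range (N + 2),
        (2:ℚ) ^ (i + 1) * ((i : ℚ) + 1) * ((N + 1).choose i : ℚ) * (m.choose (i + 1) : ℚ)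
          = g (i + 1) := by
      intro i _
      simp only [hg, Nat.add_sub_cancel]
      push_cast
      ring
    rw [Finset.sum_congr rfl this]
    have hz : ((N + 1).choose (N + 2) : ℚ) = 0 := by
      rw [Nat.choose_eq_zero_of_lt (by omega)]; simp
    rw [hz]
    ring
  rw [Finset.sum_add_distrib, Finset.sum_add_distrib, hshift,
    ← Finset.sum_add_distrib, ← Finset.sum_add_distrib]
  refine Finset.sum_congr rfl fun j _ => ?_
  rcases j with _ | i
  · simp [hg]
    ring
  · have keyQ : ((i : ℚ) + 1) * (N + 1).choose i + (2 * i + 3) * (N + 1).choose (i + 1)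
        + ((N : ℚ) + 1) * N.choose (i + 1) = ((N : ℚ) + 2) * (N + 2).choose (i + 1) := by
      exact_mod_cast congrArg (Nat.cast : ℕ → ℚ) (key_choose N i)
    simp only [hg, Nat.add_sub_cancel]
    push_cast
    linear_combination (-(2 : ℚ) ^ (i + 1) * (m.choose (i + 1) : ℚ)) * keyQ






lemma binomPoly_eval (n k m : ℕ) (hk : k ≤ n) :
    (binomPoly n k).eval (m : ℚ) = ((m + (n - k)).choose n : ℚ) := by
  unfold binomPoly
  rw [Polynomial.eval_mul, Polynomial.eval_C, Polynomial.eval_prod]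
  have h1 : ∀ j ∈ Finset.range n,
      (Polynomial.X + Polynomial.C ((n : ℚ) - k - j)).eval (m : ℚ)
        = ((m + (n - k) : ℕ) : ℚ) - j := by
    intro j _
    rw [Polynomial.eval_add, Polynomial.eval_X, Polynomial.eval_C]
    push_cast [hk]
    ring
  rw [Finset.prod_congr rfl h1, prod_sub_cast, Nat.descFactorial_eq_factorial_mul_choose]
  have hf : (n.factorial : ℚ) ≠ 0 := by exact_mod_cast n.factorial_ne_zero
  push_cast
  field_simp

lemma crossPoly_eval (t m : ℕ) : (crossPoly t).eval (m : ℚ) = Bq t m := by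
  unfold crossPoly
  rw [Polynomial.eval_finset_sum]
  have h1 : ∀ k ∈ Finset.range (t + 1),
      (Polynomial.C (t.choose k : ℚ) * binomPoly t k).eval (m : ℚ)
        = ((t.choose k * (m + (t - k)).choose t : ℕ) : ℚ) := by
    intro k hk
    simp only [Finset.mem_range] at hk
    rw [Polynomial.eval_mul, Polynomial.eval_C, binomPoly_eval t k m (by omega)]
    push_cast
    ring
  rw [Finset.sum_congr rfl h1, ← Nat.cast_sum]
  have h2 : ∑ k ∈ Finset.range (t + 1), t.choose k * (m + (t - k)).choose t
      = ∑ k ∈ Finset.range (t + 1), t.choose k * (m + k).choose t := by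
    have := Finset.sum_range_reflect (fun k => t.choose k * (m + k).choose t) (t + 1)
    rw [← this]
    refine Finset.sum_congr rfl fun k hk => ?_
    simp only [Finset.mem_range] at hk
    have hk' : k ≤ t := by omega
    rw [Nat.add_sub_cancel]
    rw [Nat.choose_symm hk']
  rw [h2, A_eq_S]
  unfold Bq
  push_cast
  rfl

theorem cross_polynomial_recursion (n : ℕ) (hn : 2 ≤ n) :
    crossPoly n =
      Polynomial.C ((n : ℚ)⁻¹) * (2 * Polynomial.X + 1) * crossPoly (n - 1)
        + Polynomial.C (((n : ℚ) - 1) / n) * crossPoly (n - 2) := by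
  obtain ⟨N, rfl⟩ : ∃ N, n = N + 2 := ⟨n - 2, by omega⟩
  apply Polynomial.eq_of_infinite_eval_eq
  refine Set.Infinite.mono ?_ (Set.infinite_range_of_injective (Nat.cast_injective (R := ℚ)))
  rintro x ⟨m, rfl⟩
  simp only [Set.mem_setOf_eq]
  have e1 : N + 2 - 1 = N + 1 := by omega
  have e2 : N + 2 - 2 = N := by omega
  rw [e1, e2, Polynomial.eval_add, Polynomial.eval_mul, Polynomial.eval_mul,
    Polynomial.eval_C, Polynomial.eval_mul, Polynomial.eval_C,
    Polynomial.eval_add, Polynomial.eval_mul, Polynomial.eval_X, Polynomial.eval_one,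
    crossPoly_eval, crossPoly_eval, crossPoly_eval]
  have hne : ((N : ℚ) + 2) ≠ 0 := by positivity
  have h := S_rec N m
  have hc : ((N + 2 : ℕ) : ℚ) = (N : ℚ) + 2 := by push_cast; ring
  rw [hc, Polynomial.eval_ofNat]
  field_simp
  linear_combination h
end

section
/- The h*-polynomial of the symmetric edge polytope of the complete bipartite graph K_{a+1,b+1} satisfies h*_{a,b}(t) = Σ_{i=0}^{min(a,b)} binom(2i,i)·binom(a,i)·binom(b,i)·t^i·(1+t)^{a+b+1-2i}, and this polynomial is palindromic of degree a+b+1: its coefficient of t^j equals its coefficient of t^{a+b+1-j} for all 0 ≤ j ≤ a+b+1. -/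
open Polynomial

/-- The h*-polynomial of the symmetric edge polytope of `K_{a+1,b+1}`:
`h*_{a,b}(t) = ∑_{i=0}^{min(a,b)} binom(2i,i) binom(a,i) binom(b,i) t^i (1+t)^{a+b+1-2i}`. -/
noncomputable def hStarBipartite (a b : ℕ) : Polynomial ℤ :=
  ∑ i ∈ Finset.range (min a b + 1),
    Polynomial.C (((2 * i).choose i * a.choose i * b.choose i : ℕ) : ℤ) *
      Polynomial.X ^ i * (1 + Polynomial.X) ^ (a + b + 1 - 2 * i)

lemma hstar_key (n i j : ℕ) (h2 : 2 * i ≤ n) (hj : j ≤ n) :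
    (if i ≤ j then ((n - 2 * i).choose (j - i) : ℤ) else 0) =
      (if i ≤ n - j then ((n - 2 * i).choose (n - j - i) : ℤ) else 0) := by
  by_cases h1 : i ≤ j
  · by_cases h3 : i ≤ n - j
    · simp only [h1, h3, if_true]
      by_cases h4 : j - i ≤ n - 2 * i
      · have : n - j - i = (n - 2 * i) - (j - i) := by omega
        rw [this, Nat.choose_symm h4]
      · rw [Nat.choose_eq_zero_of_lt (by omega), Nat.choose_eq_zero_of_lt (by omega)]
    · simp only [h1, h3, if_true, if_false]
      rw [Nat.choose_eq_zero_of_lt (by omega)]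
      simp
  · have h3 : i ≤ n - j := by omega
    simp only [h1, h3, if_true, if_false]
    rw [Nat.choose_eq_zero_of_lt (by omega)]
    simp

/-- `h*_{a,b}` is palindromic of degree `a+b+1`. -/
theorem hStarBipartite_palindromic (a b : ℕ) (j : ℕ) (hj : j ≤ a + b + 1) :
    (hStarBipartite a b).coeff j = (hStarBipartite a b).coeff (a + b + 1 - j) := by
  unfold hStarBipartite
  rw [Polynomial.finset_sum_coeff, Polynomial.finset_sum_coeff]
  apply Finset.sum_congr rfl
  intro i hi
  rw [Finset.mem_range] at hi
  have h2 : 2 * i ≤ a + b + 1 := by omega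
  rw [mul_assoc, mul_assoc, Polynomial.coeff_C_mul, Polynomial.coeff_C_mul]
  congr 1
  rw [mul_comm (Polynomial.X ^ i), Polynomial.coeff_mul_X_pow', Polynomial.coeff_mul_X_pow']
  simpa [Polynomial.coeff_one_add_X_pow, apply_ite (Nat.cast : ℕ → ℤ)] using
    hstar_key (a + b + 1) i j h2 hj
end

section
/- The polynomial h*_{2,2,n}(t) = 20·binom(n,3)·(1+t)^{n-3} t^3 + 2·binom(3n,2)·(1+t)^{n-1} t^2 + 2·(3n+1)·(1+t)^{n+1} t + (1+t)^{n+3} is palindromic of degree n+3 for all n ≥ 3. -/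
open Polynomial

lemma aux_palin (c : ℤ) (a b d j : ℕ) (hab : a + 2 * b = d) (hj : j ≤ d) :
    (Polynomial.C c * (1 + Polynomial.X) ^ a * Polynomial.X ^ b).coeff j
      = (Polynomial.C c * (1 + Polynomial.X) ^ a * Polynomial.X ^ b).coeff (d - j) := by
  simp only [mul_assoc, coeff_C_mul, Polynomial.coeff_mul_X_pow']
  by_cases h1 : b ≤ j
  · by_cases h2 : b ≤ d - j
    · simp only [h1, h2, if_true]
      rw [Polynomial.coeff_one_add_X_pow, Polynomial.coeff_one_add_X_pow]
      have hja : j - b ≤ a := by omega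
      have : d - j - b = a - (j - b) := by omega
      rw [this, Nat.choose_symm hja]
    · simp only [h1, h2, if_true, if_false]
      rw [Polynomial.coeff_one_add_X_pow]
      have : a < j - b := by omega
      rw [Nat.choose_eq_zero_of_lt this]
      simp
  · by_cases h2 : b ≤ d - j
    · simp only [h1, h2, if_true, if_false]
      rw [Polynomial.coeff_one_add_X_pow]
      have : a < d - j - b := by omega
      rw [Nat.choose_eq_zero_of_lt this]
      simp
    · simp [h1, h2]

/-- The h*-polynomial of the symmetric edge polytope of `K_{2,2,n}`:
`h*_{2,2,n}(t) = 20 binom(n,3)(1+t)^{n-3} t^3 + 2 binom(3n,2)(1+t)^{n-1} t^2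
  + 2(3n+1)(1+t)^{n+1} t + (1+t)^{n+3}`. -/
noncomputable def hStar22n (n : ℕ) : Polynomial ℤ :=
  Polynomial.C (20 * (n.choose 3 : ℤ)) * (1 + Polynomial.X) ^ (n - 3) * Polynomial.X ^ 3
    + Polynomial.C (2 * ((3 * n).choose 2 : ℤ)) * (1 + Polynomial.X) ^ (n - 1) * Polynomial.X ^ 2
    + Polynomial.C (2 * (3 * (n : ℤ) + 1)) * (1 + Polynomial.X) ^ (n + 1) * Polynomial.X
    + (1 + Polynomial.X) ^ (n + 3)

/-- `h*_{2,2,n}` is palindromic of degree `n+3` for all `n ≥ 3`. -/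
theorem hStar22n_palindromic (n : ℕ) (hn : 3 ≤ n) (j : ℕ) (hj : j ≤ n + 3) :
    (hStar22n n).coeff j = (hStar22n n).coeff (n + 3 - j) := by
  have e4 : ((1 + Polynomial.X : Polynomial ℤ)) ^ (n + 3)
      = Polynomial.C (1 : ℤ) * (1 + Polynomial.X) ^ (n + 3) * Polynomial.X ^ 0 := by
    simp
  have e3 : Polynomial.C (2 * (3 * (n : ℤ) + 1)) * (1 + Polynomial.X) ^ (n + 1) * Polynomial.X
      = Polynomial.C (2 * (3 * (n : ℤ) + 1)) * (1 + Polynomial.X) ^ (n + 1)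
        * Polynomial.X ^ 1 := by
    rw [pow_one]
  unfold hStar22n
  rw [e3, e4]
  simp only [coeff_add]
  rw [aux_palin _ (n - 3) 3 (n + 3) j (by omega) hj,
    aux_palin _ (n - 1) 2 (n + 3) j (by omega) hj,
    aux_palin _ (n + 1) 1 (n + 3) j (by omega) hj,
    aux_palin _ (n + 3) 0 (n + 3) j (by omega) hj]
end

section
/- Let A and B be disjoint finite totally ordered sets with |A| = a ≥ 1 and |B| = b ≥ 1. Then the number of planar spanning trees between A and B equals binom(a+b-2, b-1), where a planar spanning tree is a subset E of A × B with |E| = a + b − 1, such that every element of A and of B lies in some pair of E, and such that (a₁,b₁),(a₂,b₂) ∈ E with a₁ < a₂ implies b₁ ≤ b₂ (equivalently, no two pairs cross: there are no (a₁,b₁),(a₂,b₂) ∈ E with a₁ < a₂ and b₂ < b₁). -/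
/-- A planar spanning tree between the ordered sets `Fin a` and `Fin b`: a set `E` of
`a + b - 1` pairs covering every element on both sides, with no two pairs crossing. -/
def IsPlanarSpanningTree (a b : ℕ) (E : Finset (Fin a × Fin b)) : Prop :=
  E.card = a + b - 1 ∧
    (∀ x : Fin a, ∃ y : Fin b, (x, y) ∈ E) ∧
    (∀ y : Fin b, ∃ x : Fin a, (x, y) ∈ E) ∧
    ∀ p ∈ E, ∀ q ∈ E, p.1 < q.1 → p.2 ≤ q.2

open Finset

namespace PSTaux

/-- number of elements of `S` below `k`. -/
def yc {m : ℕ} (S : Finset (Fin m)) (k : ℕ) : ℕ :=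
  (S.filter (fun i => i.val < k)).card

lemma yc_zero {m : ℕ} (S : Finset (Fin m)) : yc S 0 = 0 := by
  simp [yc]

lemma yc_mono {m : ℕ} (S : Finset (Fin m)) {k l : ℕ} (h : k ≤ l) : yc S k ≤ yc S l := by
  apply card_le_card
  intro i hi
  simp only [mem_filter] at hi ⊢
  exact ⟨hi.1, by omega⟩

lemma yc_le_card {m : ℕ} (S : Finset (Fin m)) (k : ℕ) : yc S k ≤ S.card :=
  card_le_card (filter_subset _ _)

lemma yc_top {m : ℕ} (S : Finset (Fin m)) {k : ℕ} (h : m ≤ k) : yc S k = S.card := by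
  unfold yc
  congr 1
  apply filter_true_of_mem
  intro i _
  exact lt_of_lt_of_le i.isLt h

lemma yc_succ_mem {m : ℕ} {S : Finset (Fin m)} {i : Fin m} (h : i ∈ S) :
    yc S ((i : ℕ) + 1) = yc S (i : ℕ) + 1 := by
  unfold yc
  have hins : S.filter (fun j => j.val < (i : ℕ) + 1)
      = insert i (S.filter (fun j => j.val < (i : ℕ))) := by
    ext j
    simp only [mem_filter, mem_insert]
    constructor
    · rintro ⟨hj, hlt⟩
      rcases eq_or_lt_of_le (Nat.lt_succ_iff.mp hlt) with he | hl
      · left; exact Fin.ext he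
      · right; exact ⟨hj, hl⟩
    · rintro (rfl | ⟨hj, hlt⟩)
      · exact ⟨h, Nat.lt_succ_self _⟩
      · exact ⟨hj, Nat.lt_succ_of_lt hlt⟩
  rw [hins, card_insert_of_notMem]
  simp

lemma yc_succ_notMem {m : ℕ} {S : Finset (Fin m)} {i : Fin m} (h : i ∉ S) :
    yc S ((i : ℕ) + 1) = yc S (i : ℕ) := by
  unfold yc
  congr 1
  ext j
  simp only [mem_filter]
  constructor
  · rintro ⟨hj, hlt⟩
    refine ⟨hj, ?_⟩
    rcases eq_or_lt_of_le (Nat.lt_succ_iff.mp hlt) with he | hl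
    · exact absurd (Fin.ext he ▸ hj) h
    · exact hl
  · rintro ⟨hj, hlt⟩
    exact ⟨hj, Nat.lt_succ_of_lt hlt⟩

lemma yc_succ_stable {m : ℕ} (S : Finset (Fin m)) {k : ℕ} (h : m ≤ k) :
    yc S (k + 1) = yc S k := by
  rw [yc_top S h, yc_top S (le_trans h (Nat.le_succ k))]

lemma yc_succ_le {m : ℕ} (S : Finset (Fin m)) (k : ℕ) : yc S (k + 1) ≤ yc S k + 1 := by
  by_cases h : k < m
  · set i : Fin m := ⟨k, h⟩
    by_cases hi : i ∈ S
    · have := yc_succ_mem hi; simp only [i] at this; omega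
    · have := yc_succ_notMem hi; simp only [i] at this; omega
  · rw [yc_succ_stable S (by omega)]; omega

lemma mem_iff_yc {m : ℕ} {S : Finset (Fin m)} (i : Fin m) :
    i ∈ S ↔ yc S ((i : ℕ) + 1) = yc S (i : ℕ) + 1 := by
  by_cases h : i ∈ S
  · simp [h, yc_succ_mem h]
  · simp only [h, false_iff]
    rw [yc_succ_notMem h]
    omega

lemma yc_add_compl {m : ℕ} (S : Finset (Fin m)) (k : ℕ) :
    yc S k + yc Sᶜ k = yc (univ : Finset (Fin m)) k := by
  unfold yc
  rw [← card_union_of_disjoint, ← filter_union, union_compl]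
  exact disjoint_filter_filter disjoint_compl_right

lemma yc_univ {m : ℕ} (k : ℕ) : yc (univ : Finset (Fin m)) k = min k m := by
  induction k with
  | zero => simp [yc_zero]
  | succ k ih =>
    by_cases h : k < m
    · have := yc_succ_mem (S := (univ : Finset (Fin m))) (i := ⟨k, h⟩) (mem_univ _)
      simp only at this
      omega
    · rw [yc_succ_stable _ (by omega)]; omega

lemma exists_step (g : ℕ → ℕ) (h0 : g 0 = 0) (hstep : ∀ k, g (k + 1) ≤ g k + 1)
    (n v : ℕ) (hv : v ≤ g n) : ∃ k, k ≤ n ∧ g k = v := by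
  induction n with
  | zero => exact ⟨0, le_refl _, by omega⟩
  | succ n ih =>
    by_cases h : v ≤ g n
    · obtain ⟨k, hk, hg⟩ := ih h
      exact ⟨k, by omega, hg⟩
    · have := hstep n
      exact ⟨n + 1, le_refl _, by omega⟩


variable {a b : ℕ}

/-- The `k`-th cell of the lattice path encoded by `S`. -/
def cellF (ha : 0 < a) (hb : 0 < b) (S : Finset (Fin (a + b - 2))) (k : ℕ) :
    Fin a × Fin b :=
  (⟨min (yc Sᶜ k) (a - 1), by omega⟩, ⟨min (yc S k) (b - 1), by omega⟩)

/-- The planar spanning tree encoded by `S`. -/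
def treeF (ha : 0 < a) (hb : 0 < b) (S : Finset (Fin (a + b - 2))) :
    Finset (Fin a × Fin b) :=
  (range (a + b - 1)).image (cellF ha hb S)

section forward

variable (ha : 0 < a) (hb : 0 < b) {S : Finset (Fin (a + b - 2))}

lemma yc_le_b (hS : S.card = b - 1) (k : ℕ) : yc S k ≤ b - 1 := hS ▸ yc_le_card S k

lemma compl_card (ha : 0 < a) (hb : 0 < b) (hS : S.card = b - 1) : Sᶜ.card = a - 1 := by
  have h1 := card_compl S
  have h2 : S.card ≤ Fintype.card (Fin (a + b - 2)) := S.card_le_univ.trans_eq (by simp)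
  simp only [Fintype.card_fin] at h1 h2
  omega

lemma ycc_le_a (ha : 0 < a) (hb : 0 < b) (hS : S.card = b - 1) (k : ℕ) : yc Sᶜ k ≤ a - 1 :=
  (compl_card ha hb hS) ▸ yc_le_card Sᶜ k

lemma cellF_fst (hS : S.card = b - 1) (k : ℕ) : ((cellF ha hb S k).1 : ℕ) = yc Sᶜ k := by
  show min (yc Sᶜ k) (a - 1) = yc Sᶜ k
  exact min_eq_left (ycc_le_a ha hb hS k)

lemma cellF_snd (hS : S.card = b - 1) (k : ℕ) : ((cellF ha hb S k).2 : ℕ) = yc S k := by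
  show min (yc S k) (b - 1) = yc S k
  exact min_eq_left (yc_le_b hS k)

lemma cellF_sum (hS : S.card = b - 1) {k : ℕ} (hk : k ≤ a + b - 2) :
    ((cellF ha hb S k).1 : ℕ) + ((cellF ha hb S k).2 : ℕ) = k := by
  rw [cellF_fst ha hb hS, cellF_snd ha hb hS]
  have := yc_add_compl S k
  rw [yc_univ] at this
  omega

lemma mem_treeF_eq {p : Fin a × Fin b} (hp : p ∈ treeF ha hb S) :
    ∃ k, k ≤ a + b - 2 ∧ p = cellF ha hb S k := by
  simp only [treeF, mem_image, mem_range] at hp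
  obtain ⟨k, hk, rfl⟩ := hp
  exact ⟨k, by omega, rfl⟩

lemma treeF_spanning (hS : S.card = b - 1) : IsPlanarSpanningTree a b (treeF ha hb S) := by
  refine ⟨?_, ?_, ?_, ?_⟩
  · rw [treeF, card_image_of_injOn, card_range]
    intro j hj k hk hjk
    simp only [mem_coe, mem_range] at hj hk
    have h1 := cellF_sum ha hb hS (k := j) (by omega)
    have h2 := cellF_sum ha hb hS (k := k) (by omega)
    rw [hjk] at h1
    omega
  · intro x
    obtain ⟨k, hk, hg⟩ := exists_step (yc Sᶜ) (yc_zero Sᶜ) (yc_succ_le Sᶜ)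
      (a + b - 2) x (by
        rw [yc_top Sᶜ (le_refl _), compl_card ha hb hS]
        omega)
    refine ⟨(cellF ha hb S k).2, ?_⟩
    have hx : (x, (cellF ha hb S k).2) = cellF ha hb S k := by
      have := cellF_fst ha hb hS k
      ext
      · simp only []
        omega
      · rfl
    rw [hx]
    simp only [treeF, mem_image]
    exact ⟨k, by simp only [mem_range]; omega, rfl⟩
  · intro y
    obtain ⟨k, hk, hg⟩ := exists_step (yc S) (yc_zero S) (yc_succ_le S)
      (a + b - 2) y (by
        rw [yc_top S (le_refl _), hS]
        omega)
    refine ⟨(cellF ha hb S k).1, ?_⟩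
    have hx : ((cellF ha hb S k).1, y) = cellF ha hb S k := by
      have := cellF_snd ha hb hS k
      ext
      · rfl
      · simp only []
        omega
    rw [hx]
    simp only [treeF, mem_image]
    exact ⟨k, by simp only [mem_range]; omega, rfl⟩
  · intro p hp q hq hlt
    obtain ⟨j, hj, rfl⟩ := mem_treeF_eq ha hb hp
    obtain ⟨k, hk, rfl⟩ := mem_treeF_eq ha hb hq
    have h1 := cellF_fst ha hb hS j
    have h2 := cellF_fst ha hb hS k
    have h3 := cellF_snd ha hb hS j
    have h4 := cellF_snd ha hb hS k
    have hlt' : yc Sᶜ j < yc Sᶜ k := by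
      rw [← h1, ← h2]
      exact hlt
    have hjk : j < k := by
      by_contra hc
      exact absurd (yc_mono Sᶜ (by omega : k ≤ j)) (by omega)
    have := yc_mono S hjk.le
    show ((cellF ha hb S j).2 : ℕ) ≤ ((cellF ha hb S k).2 : ℕ)
    omega

end forward

lemma mem_treeF_unique (ha : 0 < a) (hb : 0 < b) {S : Finset (Fin (a + b - 2))}
    (hS : S.card = b - 1) {p : Fin a × Fin b} (hp : p ∈ treeF ha hb S) :
    p = cellF ha hb S ((p.1 : ℕ) + (p.2 : ℕ)) := by
  obtain ⟨k, hk, rfl⟩ := mem_treeF_eq ha hb hp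
  rw [cellF_sum ha hb hS hk]

lemma treeF_injOn (ha : 0 < a) (hb : 0 < b) :
    Set.InjOn (treeF ha hb) {S : Finset (Fin (a + b - 2)) | S.card = b - 1} := by
  intro S hS S' hS' heq
  simp only [Set.mem_setOf_eq] at hS hS'
  have hyc : ∀ k, k ≤ a + b - 2 → yc S k = yc S' k := by
    intro k hk
    have hmem : cellF ha hb S k ∈ treeF ha hb S' := by
      rw [← heq]
      simp only [treeF, mem_image]
      exact ⟨k, by simp only [mem_range]; omega, rfl⟩
    have := mem_treeF_unique ha hb hS' hmem
    rw [cellF_sum ha hb hS hk] at this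
    have h1 := cellF_snd ha hb hS k
    have h2 := cellF_snd ha hb hS' k
    rw [this] at h1
    omega
  ext i
  have h1 : (i : ℕ) + 1 ≤ a + b - 2 := i.isLt
  rw [mem_iff_yc i, mem_iff_yc i, hyc _ h1, hyc _ (by omega)]

section backward

variable {a b : ℕ} {E : Finset (Fin a × Fin b)}

lemma sum_injOn (hcross : ∀ p ∈ E, ∀ q ∈ E, p.1 < q.1 → p.2 ≤ q.2) :
    ∀ p ∈ E, ∀ q ∈ E, (p.1 : ℕ) + (p.2 : ℕ) = (q.1 : ℕ) + (q.2 : ℕ) → p = q := by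
  intro p hp q hq hsum
  rcases lt_trichotomy p.1 q.1 with h | h | h
  · have h2 := hcross p hp q hq h
    have h1 : (p.1 : ℕ) < q.1 := h
    have h3 : (p.2 : ℕ) ≤ q.2 := h2
    omega
  · have h1 : (p.1 : ℕ) = q.1 := by rw [h]
    have : p.2 = q.2 := Fin.ext (by omega)
    exact Prod.ext h this
  · have h2 := hcross q hq p hp h
    have h1 : (q.1 : ℕ) < p.1 := h
    have h3 : (q.2 : ℕ) ≤ p.2 := h2
    omega

lemma sum_image (ha : 0 < a) (hb : 0 < b) (hE : IsPlanarSpanningTree a b E) :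
    E.image (fun p => (p.1 : ℕ) + (p.2 : ℕ)) = range (a + b - 1) := by
  obtain ⟨hcard, -, -, hcross⟩ := hE
  apply eq_of_subset_of_card_le
  · intro k hk
    simp only [mem_image] at hk
    obtain ⟨p, hp, rfl⟩ := hk
    simp only [mem_range]
    have h1 : (p.1 : ℕ) < a := p.1.isLt
    have h2 : (p.2 : ℕ) < b := p.2.isLt
    omega
  · rw [card_range, card_image_of_injOn, hcard]
    intro p hp q hq
    exact sum_injOn hcross p hp q hq

lemma treeF_surjOn (ha : 0 < a) (hb : 0 < b) (hE : IsPlanarSpanningTree a b E) :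
    ∃ S : Finset (Fin (a + b - 2)), S.card = b - 1 ∧ treeF ha hb S = E := by
  classical
  obtain ⟨hcard, hA, hB, hcross⟩ := hE
  -- the unique cell with coordinate sum `k`
  have hex : ∀ k : ℕ, ∃ p : Fin a × Fin b, k < a + b - 1 →
      p ∈ E ∧ (p.1 : ℕ) + (p.2 : ℕ) = k := by
    intro k
    by_cases hk : k < a + b - 1
    · have : k ∈ E.image (fun p => (p.1 : ℕ) + (p.2 : ℕ)) := by
        rw [sum_image ha hb ⟨hcard, hA, hB, hcross⟩]
        simpa using hk
      simp only [mem_image] at this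
      obtain ⟨p, hp, hps⟩ := this
      exact ⟨p, fun _ => ⟨hp, hps⟩⟩
    · exact ⟨(⟨0, ha⟩, ⟨0, hb⟩), fun h => absurd h hk⟩
  choose c hc using hex
  have hcmem : ∀ k, k < a + b - 1 → c k ∈ E := fun k hk => (hc k hk).1
  have hcsum : ∀ k, k < a + b - 1 → ((c k).1 : ℕ) + ((c k).2 : ℕ) = k :=
    fun k hk => (hc k hk).2
  have hun : ∀ k, k < a + b - 1 → ∀ p ∈ E, (p.1 : ℕ) + (p.2 : ℕ) = k → p = c k := by
    intro k hk p hp hps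
    exact sum_injOn hcross p hp (c k) (hcmem k hk) (by rw [hps, hcsum k hk])
  -- monotone steps
  have hstep : ∀ k, k + 1 < a + b - 1 →
      ((c k).1 : ℕ) ≤ ((c (k + 1)).1 : ℕ) ∧ ((c k).2 : ℕ) ≤ ((c (k + 1)).2 : ℕ) := by
    intro k hk
    have hs1 := hcsum k (by omega)
    have hs2 := hcsum (k + 1) hk
    constructor
    · by_contra hlt
      push_neg at hlt
      have : (c (k + 1)).1 < (c k).1 := hlt
      have h2 := hcross _ (hcmem (k + 1) hk) _ (hcmem k (by omega)) this
      have h3 : ((c (k + 1)).2 : ℕ) ≤ (c k).2 := h2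
      omega
    · by_contra hlt
      push_neg at hlt
      have h1 : ¬ ((c k).1 < (c (k + 1)).1) := by
        intro hc1
        have := hcross _ (hcmem k (by omega)) _ (hcmem (k + 1) hk) hc1
        have : ((c k).2 : ℕ) ≤ (c (k + 1)).2 := this
        omega
      have h1' : ((c (k + 1)).1 : ℕ) ≤ (c k).1 := by
        have := Fin.lt_def (a := (c k).1) (b := (c (k + 1)).1)
        omega
      omega
  -- the set of up-steps
  set S : Finset (Fin (a + b - 2)) :=
    univ.filter (fun i : Fin (a + b - 2) =>
      ((c ((i : ℕ) + 1)).2 : ℕ) = ((c (i : ℕ)).2 : ℕ) + 1) with hSdef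
  have claimA : ∀ k, k ≤ a + b - 2 → ((c k).2 : ℕ) = yc S k := by
    intro k hk
    induction k with
    | zero =>
      rw [yc_zero]
      have := hcsum 0 (by omega)
      omega
    | succ k ih =>
      have ih' := ih (by omega)
      have hk1 : k + 1 < a + b - 1 := by omega
      have hmono := hstep k hk1
      have hs1 := hcsum k (by omega)
      have hs2 := hcsum (k + 1) hk1
      set i : Fin (a + b - 2) := ⟨k, by omega⟩ with hidef
      by_cases hup : ((c (k + 1)).2 : ℕ) = ((c k).2 : ℕ) + 1
      · have hiS : i ∈ S := by
          rw [hSdef, mem_filter]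
          exact ⟨mem_univ _, hup⟩
        have := yc_succ_mem hiS
        simp only [hidef] at this
        omega
      · have hflat : ((c (k + 1)).2 : ℕ) = ((c k).2 : ℕ) := by omega
        have hiS : i ∉ S := by
          rw [hSdef, mem_filter]
          simp only [hidef, mem_univ, true_and]
          omega
        have := yc_succ_notMem hiS
        simp only [hidef] at this
        omega
  have htop : ((c (a + b - 2)).2 : ℕ) = b - 1 := by
    have hs := hcsum (a + b - 2) (by omega)
    have h1 : ((c (a + b - 2)).1 : ℕ) < a := (c (a + b - 2)).1.isLt
    have h2 : ((c (a + b - 2)).2 : ℕ) < b := (c (a + b - 2)).2.isLt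
    omega
  have hScard : S.card = b - 1 := by
    have := claimA (a + b - 2) (le_refl _)
    rw [yc_top S (le_refl _)] at this
    omega
  refine ⟨S, hScard, ?_⟩
  -- cells agree
  have hcells : ∀ k, k ≤ a + b - 2 → cellF ha hb S k = c k := by
    intro k hk
    have hyS := claimA k hk
    have hs := hcsum k (by omega)
    have hcompl := yc_add_compl S k
    rw [yc_univ] at hcompl
    have h1 := cellF_fst ha hb hScard k
    have h2 := cellF_snd ha hb hScard k
    ext
    · rw [h1]; omega
    · rw [h2]; omega
  apply eq_of_subset_of_card_le
  · intro p hp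
    obtain ⟨k, hk, rfl⟩ := mem_treeF_eq ha hb hp
    rw [hcells k hk]
    exact hcmem k (by omega)
  · have := (treeF_spanning ha hb hScard).1
    omega

end backward

end PSTaux

/-- The number of planar spanning trees between sets of sizes `a` and `b` is
`binom(a+b-2, b-1)`. -/
theorem card_planar_spanning_trees (a b : ℕ) (ha : 1 ≤ a) (hb : 1 ≤ b) :
    {E : Finset (Fin a × Fin b) | IsPlanarSpanningTree a b E}.ncard
      = (a + b - 2).choose (b - 1) := by
  classical
  open PSTaux in
  have key : {E : Finset (Fin a × Fin b) | IsPlanarSpanningTree a b E}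
      = (treeF ha hb) '' {S : Finset (Fin (a + b - 2)) | S.card = b - 1} := by
    ext E
    simp only [Set.mem_setOf_eq, Set.mem_image]
    constructor
    · intro hE
      obtain ⟨S, hScard, hSE⟩ := treeF_surjOn ha hb hE
      exact ⟨S, hScard, hSE⟩
    · rintro ⟨S, hS, rfl⟩
      exact treeF_spanning ha hb hS
  rw [key, Set.ncard_image_of_injOn (treeF_injOn ha hb)]
  have hset : {S : Finset (Fin (a + b - 2)) | S.card = b - 1}
      = ↑(powersetCard (b - 1) (univ : Finset (Fin (a + b - 2)))) := by
    ext S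
    simp [Finset.mem_powersetCard_univ]
  rw [hset, Set.ncard_coe_finset, Finset.card_powersetCard, Finset.card_univ,
    Fintype.card_fin]
end

section
/- For n ≥ 2, the symmetric edge polytope of the complete multipartite graph K_{a_1,...,a_k} (with k ≥ 3 parts, part sizes a_1,...,a_k summing to a) has exactly 2^a − Σ_{i=1}^k (2^{a_i} − 2) − 2 facets, assuming the characterization that facets correspond, up to adding a constant, to labelings λ: V → ℤ of type (i) (λ(A_i) = {−1,1} on one part, 0 elsewhere) or type (ii) (λ(V) = {0,1}, with λ constant on each part, or taking both values on some part A_i and on the complement of A_i), excluding the two constant labelings. -/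
namespace FacetCount

variable {k : ℕ} {a : Fin k → ℕ}

abbrev V (a : Fin k → ℕ) := (i : Fin k) × Fin (a i)

def NC {β : Type*} (h : β → Bool) : Prop := (∃ x, h x = true) ∧ (∃ x, h x = false)

lemma card_NC (β : Type*) [Fintype β] [DecidableEq β] [Nonempty β] :
    Nat.card {g : β → Bool // NC g} = 2 ^ (Fintype.card β) - 2 := by
  classical
  rw [Nat.card_eq_fintype_card, Fintype.card_subtype]
  have hne : (fun _ : β => true) ≠ (fun _ => false) := by
    intro h
    obtain ⟨x⟩ := ‹Nonempty β›
    exact absurd (congrFun h x) (by simp)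
  have : (Finset.univ.filter fun g : β → Bool => NC g)
      = Finset.univ \ {fun _ => true, fun _ => false} := by
    ext g
    rw [Finset.mem_sdiff, Finset.mem_filter]
    simp only [Finset.mem_filter, Finset.mem_univ, true_and, Finset.mem_sdiff,
      Finset.mem_insert, Finset.mem_singleton, NC]
    constructor
    · rintro ⟨⟨x, hx⟩, ⟨y, hy⟩⟩
      rintro (rfl | rfl)
      · simp at hy
      · simp at hx
    · intro hg
      push_neg at hg
      obtain ⟨h1, h2⟩ := hg
      refine ⟨?_, ?_⟩
      · by_contra hc
        push_neg at hc
        exact h2 (funext fun x => by simpa using hc x)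
      · by_contra hc
        push_neg at hc
        exact h1 (funext fun x => by simpa using hc x)
  rw [this, Finset.card_sdiff_of_subset (by simp)]
  simp [Finset.card_insert_of_notMem, hne, Fintype.card_fun]

def toInt (g : V a → Bool) : V a → ℤ := fun v => cond (g v) 1 0

def Surj (g : V a → Bool) : Prop := (∃ v, g v = true) ∧ (∃ v, g v = false)

def BothOn (i : Fin k) (g : V a → Bool) : Prop :=
  (∃ v : V a, v.1 = i ∧ g v = true) ∧ (∃ v : V a, v.1 = i ∧ g v = false)

def BothOff (i : Fin k) (g : V a → Bool) : Prop :=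
  (∃ v : V a, v.1 ≠ i ∧ g v = true) ∧ (∃ v : V a, v.1 ≠ i ∧ g v = false)

def PC (g : V a → Bool) : Prop := ∀ i : Fin k, ∀ x y : Fin (a i), g ⟨i, x⟩ = g ⟨i, y⟩

def P (g : V a → Bool) : Prop := Surj g ∧ (PC g ∨ ∃ i, BothOn i g ∧ BothOff i g)

def Bad (i : Fin k) (g : V a → Bool) : Prop :=
  BothOn i g ∧ ∀ v w : V a, v.1 ≠ i → w.1 ≠ i → g v = g w

lemma image_toInt_eq (g : V a → Bool) (s : Set (V a)) :
    toInt g '' s = ({0, 1} : Set ℤ) ↔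
      (∃ v ∈ s, g v = true) ∧ (∃ v ∈ s, g v = false) := by
  constructor
  · intro h
    constructor
    · have h1 : (1 : ℤ) ∈ toInt g '' s := by rw [h]; simp
      obtain ⟨v, hv, hv1⟩ := h1
      refine ⟨v, hv, ?_⟩
      cases hgv : g v
      · simp [toInt, hgv] at hv1
      · rfl
    · have h0 : (0 : ℤ) ∈ toInt g '' s := by rw [h]; simp
      obtain ⟨v, hv, hv0⟩ := h0
      refine ⟨v, hv, ?_⟩
      cases hgv : g v
      · rfl
      · simp [toInt, hgv] at hv0
  · rintro ⟨⟨v, hv, hv1⟩, ⟨w, hw, hw0⟩⟩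
    ext z
    simp only [Set.mem_image, Set.mem_insert_iff, Set.mem_singleton_iff]
    constructor
    · rintro ⟨u, hu, rfl⟩
      cases h : g u <;> simp [toInt, h]
    · rintro (rfl | rfl)
      · exact ⟨w, hw, by simp [toInt, hw0]⟩
      · exact ⟨v, hv, by simp [toInt, hv1]⟩

lemma mem_S2_iff (g : V a → Bool) :
    (Set.range (toInt g) = ({0, 1} : Set ℤ) ∧
      ((∀ i : Fin k, ∀ x y : Fin (a i), toInt g ⟨i, x⟩ = toInt g ⟨i, y⟩) ∨
        ∃ i : Fin k,
          toInt g '' {v | v.1 = i} = ({0, 1} : Set ℤ) ∧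
          toInt g '' {v | v.1 ≠ i} = ({0, 1} : Set ℤ)))
      ↔ P g := by
  have hinj : ∀ v w : V a, (toInt g v = toInt g w ↔ g v = g w) := by
    intro v w
    cases hv : g v <;> cases hw : g w <;> simp [toInt, hv, hw]
  have hrange : Set.range (toInt g) = ({0, 1} : Set ℤ) ↔ Surj g := by
    rw [← Set.image_univ, image_toInt_eq]
    simp [Surj]
  unfold P PC BothOn BothOff
  rw [hrange]
  refine and_congr Iff.rfl (or_congr ?_ ?_)
  · exact forall_congr' fun i => forall_congr' fun x => forall_congr' fun y => hinj _ _
  · refine exists_congr fun i => and_congr ?_ ?_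
    · rw [image_toInt_eq]; rfl
    · rw [image_toInt_eq]; rfl

lemma bad_unique {g : V a → Bool} {i j : Fin k} (hi : Bad i g) (hj : Bad j g) : i = j := by
  by_contra hne
  obtain ⟨⟨⟨v, hv1, hvt⟩, ⟨w, hw1, hwf⟩⟩, _⟩ := hi
  have := hj.2 v w (by rw [hv1]; exact hne) (by rw [hw1]; exact hne)
  rw [hvt, hwf] at this; exact Bool.noConfusion this

lemma bad_surj {g : V a → Bool} {i : Fin k} (hi : Bad i g) : Surj g :=
  ⟨⟨hi.1.1.choose, hi.1.1.choose_spec.2⟩, ⟨hi.1.2.choose, hi.1.2.choose_spec.2⟩⟩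

lemma P_iff (g : V a → Bool) : P g ↔ Surj g ∧ ¬ ∃ i, Bad i g := by
  unfold P
  refine and_congr Iff.rfl ?_
  constructor
  · rintro (hpc | ⟨i, hon, hoff⟩) ⟨j, hbj⟩
    · obtain ⟨⟨⟨i', x⟩, hv1, hvt⟩, ⟨⟨i'', y⟩, hw1, hwf⟩⟩ := hbj.1
      dsimp at hv1 hw1; subst hv1; subst hw1
      rw [hpc _ x y, hwf] at hvt; exact Bool.noConfusion hvt
    · by_cases hij : i = j
      · subst hij
        obtain ⟨⟨v, hv1, hvt⟩, ⟨w, hw1, hwf⟩⟩ := hoff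
        have := hbj.2 v w hv1 hw1
        rw [hvt, hwf] at this; exact Bool.noConfusion this
      · obtain ⟨⟨v, hv1, hvt⟩, ⟨w, hw1, hwf⟩⟩ := hon
        have := hbj.2 v w (by rw [hv1]; exact hij) (by rw [hw1]; exact hij)
        rw [hvt, hwf] at this; exact Bool.noConfusion this
  · intro hnb
    by_cases hpc : PC g
    · exact Or.inl hpc
    · right
      unfold PC at hpc
      push_neg at hpc
      obtain ⟨i, x, y, hxy⟩ := hpc
      have hon : BothOn i g := by
        cases hx : g ⟨i, x⟩ <;> cases hy : g ⟨i, y⟩ <;> rw [hx, hy] at hxy <;>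
          first
          | exact absurd rfl hxy
          | exact ⟨⟨⟨i, y⟩, rfl, hy⟩, ⟨⟨i, x⟩, rfl, hx⟩⟩
          | exact ⟨⟨⟨i, x⟩, rfl, hx⟩, ⟨⟨i, y⟩, rfl, hy⟩⟩
      refine ⟨i, hon, ?_⟩
      by_contra hoff
      unfold BothOff at hoff
      push_neg at hoff
      apply hnb
      refine ⟨i, hon, fun v w hv hw => ?_⟩
      rcases Classical.em (∃ u : V a, u.1 ≠ i ∧ g u = true) with ht | ht
      · -- no vertex off part i is false
        have hall : ∀ u : V a, u.1 ≠ i → g u = true := by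
          intro u hu
          cases hgu : g u
          · exact absurd hgu (hoff ht u hu)
          · rfl
        rw [hall v hv, hall w hw]
      · push_neg at ht
        have hv' := ht v hv
        have hw' := ht w hw
        simp only [Bool.not_eq_true] at hv' hw'
        rw [hv', hw']



lemma card_bad (hk : 3 ≤ k) (ha : ∀ i, 1 ≤ a i) (i : Fin k) :
    Nat.card {g : V a → Bool // Bad i g} = (2 ^ (a i) - 2) * 2 := by
  classical
  have : Nontrivial (Fin k) := Fin.nontrivial_iff_two_le.mpr (by omega)
  obtain ⟨j, hj⟩ := exists_ne i
  set v0 : V a := ⟨j, ⟨0, ha j⟩⟩ with hv0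
  have hv0i : v0.1 ≠ i := hj
  set F : ({h : Fin (a i) → Bool // NC h} × Bool) → (V a → Bool) :=
    fun p v => if e : v.1 = i then p.1.1 (Fin.cast (congrArg a e) v.2) else p.2 with hF
  have Fmk : ∀ (p : {h : Fin (a i) → Bool // NC h} × Bool) (x : Fin (a i)),
      F p ⟨i, x⟩ = p.1.1 x := fun p x => dif_pos rfl
  have Foff : ∀ (p : {h : Fin (a i) → Bool // NC h} × Bool) (v : V a), v.1 ≠ i →
      F p v = p.2 := fun p v hv => dif_neg hv
  have onNC : ∀ g : V a → Bool, Bad i g → NC (fun x => g ⟨i, x⟩) := by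
    intro g hg
    obtain ⟨⟨⟨i1, x⟩, h1, ht⟩, ⟨⟨i2, y⟩, h2, hf⟩⟩ := hg.1
    dsimp only at h1 h2
    subst h1; subst h2
    exact ⟨⟨x, ht⟩, ⟨y, hf⟩⟩
  have e : {g : V a → Bool // Bad i g} ≃ ({h : Fin (a i) → Bool // NC h} × Bool) :=
    { toFun := fun g => (⟨fun x => g.1 ⟨i, x⟩, onNC g.1 g.2⟩, g.1 v0)
      invFun := fun p => ⟨F p, by
        constructor
        · obtain ⟨⟨x, hx⟩, ⟨y, hy⟩⟩ := p.1.2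
          exact ⟨⟨⟨i, x⟩, rfl, by rw [Fmk]; exact hx⟩, ⟨⟨i, y⟩, rfl, by rw [Fmk]; exact hy⟩⟩
        · intro v w hv hw
          rw [Foff p v hv, Foff p w hw]⟩
      left_inv := by
        rintro ⟨g, hg⟩
        apply Subtype.ext
        show F _ = g
        funext v
        obtain ⟨j', x⟩ := v
        by_cases e : (⟨j', x⟩ : V a).1 = i
        · dsimp only at e; subst e; exact Fmk _ x
        · rw [Foff _ _ e]
          exact hg.2 v0 ⟨j', x⟩ hv0i e
      right_inv := by
        rintro ⟨⟨h, hh⟩, b⟩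
        refine Prod.ext ?_ ?_
        · exact Subtype.ext (funext fun x => Fmk _ x)
        · exact Foff _ _ hv0i }
  haveI : Nonempty (Fin (a i)) := ⟨⟨0, ha i⟩⟩
  rw [Nat.card_congr e, Nat.card_prod, card_NC]
  simp [Nat.card_eq_fintype_card]


lemma natCard_filter {β : Type*} [Fintype β] (p : β → Prop) [DecidablePred p] :
    (Finset.univ.filter p).card = Nat.card {x // p x} := by
  rw [Nat.card_eq_fintype_card, Fintype.card_subtype]

lemma toInt_decide {f : V a → ℤ} (hf : Set.range f = ({0, 1} : Set ℤ)) :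
    toInt (fun v => decide (f v = 1)) = f := by
  funext v
  have hv : f v ∈ ({0, 1} : Set ℤ) := hf ▸ Set.mem_range_self v
  rcases hv with h | h
  · simp [toInt, h]
  · simp only [Set.mem_singleton_iff] at h
    simp [toInt, h]

lemma card_S1 (ha : ∀ i, 1 ≤ a i) :
    ({f : V a → ℤ | ∃ i : Fin k,
        (f '' {v | v.1 = i} = ({-1, 1} : Set ℤ)) ∧ ∀ v, v.1 ≠ i → f v = 0}).ncard
      = ∑ i, (2 ^ a i - 2) := by
  classical
  set S : Set (V a → ℤ) := {f | ∃ i : Fin k,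
      (f '' {v | v.1 = i} = ({-1, 1} : Set ℤ)) ∧ ∀ v, v.1 ≠ i → f v = 0} with hS
  set F : (Σ i : Fin k, {h : Fin (a i) → Bool // NC h}) → (V a → ℤ) :=
    fun p v => if e : v.1 = p.1 then (cond (p.2.1 (Fin.cast (congrArg a e) v.2)) 1 (-1))
      else 0 with hF
  have Fmk : ∀ (i : Fin k) (h : Fin (a i) → Bool) (hh : NC h) (x : Fin (a i)),
      F ⟨i, h, hh⟩ ⟨i, x⟩ = cond (h x) 1 (-1) := fun i h hh x => dif_pos rfl
  have Foff : ∀ (p : Σ i : Fin k, {h : Fin (a i) → Bool // NC h}) (v : V a),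
      v.1 ≠ p.1 → F p v = 0 := fun p v h => dif_neg h
  have hmem : ∀ p, F p ∈ S := by
    rintro ⟨i, h, hNC⟩
    refine ⟨i, ?_, fun v hv => Foff _ _ hv⟩
    ext z
    simp only [Set.mem_image, Set.mem_setOf_eq, Set.mem_insert_iff, Set.mem_singleton_iff]
    constructor
    · rintro ⟨⟨i', x⟩, hv, rfl⟩
      obtain rfl : i' = i := hv
      rw [Fmk _ h hNC x]
      cases h x <;> simp
    · rintro (rfl | rfl)
      · obtain ⟨y, hy⟩ := hNC.2
        exact ⟨⟨i, y⟩, rfl, by rw [Fmk i h hNC y, hy]; rfl⟩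
      · obtain ⟨x, hx⟩ := hNC.1
        exact ⟨⟨i, x⟩, rfl, by rw [Fmk i h hNC x, hx]; rfl⟩
  set F' : (Σ i : Fin k, {h : Fin (a i) → Bool // NC h}) → S := fun p => ⟨F p, hmem p⟩
    with hF'
  have hbij : Function.Bijective F' := by
    constructor
    · rintro ⟨i, h, hh⟩ ⟨j, h', hh'⟩ hpq
      have hfe : F ⟨i, h, hh⟩ = F ⟨j, h', hh'⟩ := congrArg Subtype.val hpq
      have hij : i = j := by
        by_contra hij
        obtain ⟨x, hx⟩ := hh.1
        have h1 : F ⟨i, h, hh⟩ ⟨i, x⟩ = 1 := by rw [Fmk i h hh x, hx]; rfl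
        have h2 : F ⟨j, h', hh'⟩ (⟨i, x⟩ : V a) = 0 := Foff _ _ hij
        rw [hfe, h2] at h1
        exact absurd h1 (by norm_num)
      subst hij
      have hhh : h = h' := by
        funext x
        have := congrFun hfe ⟨i, x⟩
        rw [Fmk i h hh x, Fmk i h' hh' x] at this
        cases hx : h x <;> cases hx' : h' x <;> rw [hx, hx'] at this <;>
          first | rfl | simp at this
      subst hhh
      rfl
    · rintro ⟨f, i, himg, hoff⟩
      have hval : ∀ x : Fin (a i), f ⟨i, x⟩ = -1 ∨ f ⟨i, x⟩ = 1 := by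
        intro x
        have : f ⟨i, x⟩ ∈ f '' {v : V a | v.1 = i} := ⟨⟨i, x⟩, rfl, rfl⟩
        rw [himg] at this
        simpa using this
      set h : Fin (a i) → Bool := fun x => decide (f ⟨i, x⟩ = 1) with hh
      have hNC : NC h := by
        constructor
        · have : (1 : ℤ) ∈ f '' {v : V a | v.1 = i} := by rw [himg]; simp
          obtain ⟨⟨i', x⟩, hv, hfx⟩ := this
          obtain rfl : i' = i := hv
          exact ⟨x, by simp [hh, hfx]⟩
        · have : (-1 : ℤ) ∈ f '' {v : V a | v.1 = i} := by rw [himg]; simp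
          obtain ⟨⟨i', x⟩, hv, hfx⟩ := this
          obtain rfl : i' = i := hv
          exact ⟨x, by simp [hh, hfx]⟩
      refine ⟨⟨i, h, hNC⟩, ?_⟩
      apply Subtype.ext
      show F _ = f
      funext v
      obtain ⟨j, x⟩ := v
      by_cases e : (⟨j, x⟩ : V a).1 = i
      · obtain rfl : j = i := e
        rw [Fmk _ h hNC x]
        rcases hval x with hx | hx <;> simp [hh, hx]
      · rw [Foff _ _ e]
        exact (hoff ⟨j, x⟩ e).symm
  rw [← Nat.card_coe_set_eq, Nat.card_congr (Equiv.ofBijective F' hbij).symm,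
    Nat.card_eq_fintype_card, Fintype.card_sigma]
  refine Finset.sum_congr rfl fun i _ => ?_
  haveI : Nonempty (Fin (a i)) := ⟨⟨0, ha i⟩⟩
  rw [← Nat.card_eq_fintype_card, card_NC]
  simp

lemma card_S2 (hk : 3 ≤ k) (ha : ∀ i, 1 ≤ a i) :
    ({f : V a → ℤ |
        Set.range f = ({0, 1} : Set ℤ) ∧
          ((∀ i : Fin k, ∀ x y : Fin (a i), f ⟨i, x⟩ = f ⟨i, y⟩) ∨
            ∃ i : Fin k,
              f '' {v | v.1 = i} = ({0, 1} : Set ℤ) ∧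
              f '' {v | v.1 ≠ i} = ({0, 1} : Set ℤ))}).ncard
      + ∑ i, (2 ^ a i - 2) * 2 = 2 ^ (∑ i, a i) - 2 := by
  classical
  haveI : Nonempty (V a) := ⟨⟨⟨0, by omega⟩, ⟨0, ha _⟩⟩⟩
  set S : Set (V a → ℤ) := {f |
      Set.range f = ({0, 1} : Set ℤ) ∧
        ((∀ i : Fin k, ∀ x y : Fin (a i), f ⟨i, x⟩ = f ⟨i, y⟩) ∨
          ∃ i : Fin k,
            f '' {v | v.1 = i} = ({0, 1} : Set ℤ) ∧
            f '' {v | v.1 ≠ i} = ({0, 1} : Set ℤ))} with hSdef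
  have e2 : {g : V a → Bool // P g} ≃ S :=
    { toFun := fun g => ⟨toInt g.1, (mem_S2_iff g.1).2 g.2⟩
      invFun := fun f => ⟨fun v => decide (f.1 v = 1), by
        have hT := toInt_decide f.2.1
        have hmem := f.2
        rw [← hT] at hmem
        exact (mem_S2_iff _).1 hmem⟩
      left_inv := by
        rintro ⟨g, hg⟩
        apply Subtype.ext
        funext v
        cases hgv : g v <;> simp [toInt, hgv]
      right_inv := by
        rintro ⟨f, hf⟩
        exact Subtype.ext (toInt_decide hf.1) }
  have h1 : S.ncard = (Finset.univ.filter (P (a := a))).card := by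
    rw [← Nat.card_coe_set_eq, Nat.card_congr e2.symm, natCard_filter]
  have hsub : Finset.univ.filter (fun g : V a → Bool => ∃ i, Bad i g)
      ⊆ Finset.univ.filter (Surj (a := a)) := by
    intro g hg
    simp only [Finset.mem_filter, Finset.mem_univ, true_and] at hg ⊢
    obtain ⟨i, hb⟩ := hg
    exact bad_surj hb
  have hPeq : Finset.univ.filter (P (a := a))
      = Finset.univ.filter (Surj (a := a))
        \ Finset.univ.filter (fun g : V a → Bool => ∃ i, Bad i g) := by
    ext g
    simp only [Finset.mem_filter, Finset.mem_univ, true_and, Finset.mem_sdiff]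
    exact P_iff g
  have hcard : (Finset.univ.filter (P (a := a))).card
      + (Finset.univ.filter (fun g : V a → Bool => ∃ i, Bad i g)).card
      = (Finset.univ.filter (Surj (a := a))).card := by
    rw [hPeq]
    exact Finset.card_sdiff_add_card_eq_card hsub
  have hbad : (Finset.univ.filter (fun g : V a → Bool => ∃ i, Bad i g)).card
      = ∑ i, (2 ^ a i - 2) * 2 := by
    have hbu : Finset.univ.filter (fun g : V a → Bool => ∃ i, Bad i g)
        = Finset.univ.biUnion (fun i => Finset.univ.filter (Bad i)) := by
      ext g
      simp only [Finset.mem_filter, Finset.mem_univ, true_and, Finset.mem_biUnion]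
    rw [hbu, Finset.card_biUnion]
    · exact Finset.sum_congr rfl fun i _ => by
        rw [natCard_filter, card_bad hk ha i]
    · intro i _ j _ hij
      refine Finset.disjoint_left.mpr fun g hgi hgj => hij ?_
      simp only [Finset.mem_filter, Finset.mem_univ, true_and] at hgi hgj
      exact bad_unique hgi hgj
  have hsurj : (Finset.univ.filter (Surj (a := a))).card = 2 ^ (∑ i, a i) - 2 := by
    rw [natCard_filter]
    have : Surj (a := a) = NC := rfl
    rw [this, card_NC]
    congr 1
    simp [Fintype.card_sigma]
  rw [h1, ← hbad, hcard, hsurj]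

end FacetCount

/-- Facet counting for the symmetric edge polytope of the complete multipartite graph
`K_{a_0,…,a_{k-1}}` with `k ≥ 3` parts: the type (i) labelings together with the type (ii)
labelings number `2^a - ∑_i (2^{a_i} - 2) - 2`, where `a = ∑_i a_i`. -/
theorem facet_count_multipartite (k : ℕ) (hk : 3 ≤ k) (a : Fin k → ℕ)
    (ha : ∀ i, 1 ≤ a i) :
    (({f : ((i : Fin k) × Fin (a i)) → ℤ |
        ∃ i : Fin k,
          (f '' {v | v.1 = i} = ({-1, 1} : Set ℤ)) ∧ ∀ v, v.1 ≠ i → f v = 0}.ncard : ℤ)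
      + ({f : ((i : Fin k) × Fin (a i)) → ℤ |
          Set.range f = ({0, 1} : Set ℤ) ∧
            ((∀ i : Fin k, ∀ x y : Fin (a i), f ⟨i, x⟩ = f ⟨i, y⟩) ∨
              ∃ i : Fin k,
                f '' {v | v.1 = i} = ({0, 1} : Set ℤ) ∧
                f '' {v | v.1 ≠ i} = ({0, 1} : Set ℤ))}.ncard : ℤ))
      = 2 ^ (∑ i, a i) - (∑ i, ((2 : ℤ) ^ (a i) - 2)) - 2 := by
  classical
  have h1 : ({f : ((i : Fin k) × Fin (a i)) → ℤ |
        ∃ i : Fin k,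
          (f '' {v | v.1 = i} = ({-1, 1} : Set ℤ)) ∧ ∀ v, v.1 ≠ i → f v = 0}).ncard
      = ∑ i, (2 ^ a i - 2) := FacetCount.card_S1 ha
  have h2 : ({f : ((i : Fin k) × Fin (a i)) → ℤ |
          Set.range f = ({0, 1} : Set ℤ) ∧
            ((∀ i : Fin k, ∀ x y : Fin (a i), f ⟨i, x⟩ = f ⟨i, y⟩) ∨
              ∃ i : Fin k,
                f '' {v | v.1 = i} = ({0, 1} : Set ℤ) ∧
                f '' {v | v.1 ≠ i} = ({0, 1} : Set ℤ))}).ncard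
      + ∑ i, (2 ^ a i - 2) * 2 = 2 ^ (∑ i, a i) - 2 := FacetCount.card_S2 hk ha
  have hpow : ∀ i, (2 : ℕ) ≤ 2 ^ a i := by
    intro i
    calc (2 : ℕ) = 2 ^ 1 := by norm_num
    _ ≤ 2 ^ a i := Nat.pow_le_pow_right (by norm_num) (ha i)
  have hsum1 : 1 ≤ ∑ i, a i := by
    have hk0 : 0 < k := lt_of_lt_of_le (by norm_num) hk
    exact le_trans (ha ⟨0, hk0⟩)
      (Finset.single_le_sum (fun i _ => Nat.zero_le _) (Finset.mem_univ (⟨0, hk0⟩ : Fin k)))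
  have hpowsum : (2 : ℕ) ≤ 2 ^ (∑ i, a i) := by
    calc (2 : ℕ) = 2 ^ 1 := by norm_num
    _ ≤ _ := Nat.pow_le_pow_right (by norm_num) hsum1
  have castS : ((∑ i, (2 ^ a i - 2) : ℕ) : ℤ) = ∑ i, ((2 : ℤ) ^ a i - 2) := by
    rw [Nat.cast_sum]
    refine Finset.sum_congr rfl fun i _ => ?_
    rw [Nat.cast_sub (hpow i)]
    push_cast
    ring
  have castS2 : ((∑ i, (2 ^ a i - 2) * 2 : ℕ) : ℤ) = (∑ i, ((2 : ℤ) ^ a i - 2)) * 2 := by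
    rw [Nat.cast_sum, Finset.sum_mul]
    refine Finset.sum_congr rfl fun i _ => ?_
    rw [Nat.cast_mul, Nat.cast_sub (hpow i)]
    push_cast
    ring
  have h2z := congrArg (Nat.cast : ℕ → ℤ) h2
  rw [Nat.cast_add, castS2, Nat.cast_sub hpowsum] at h2z
  push_cast at h2z
  rw [h1, castS]
  linarith
end
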